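/- Let n, k be positive integers with 1 ≤ k < n and e = gcd(k, n), and suppose n/e is even, so n = 2m with e dividing m. Let u, v ∈ F_q^* and suppose u is not a (2^e+1)-th power of any element of F_q^*. Then the map L_u(x) = u^{2^k}·x^{2^{2k}} + u·x is a bijection of F_q, and for the unique x_u ∈ F_q with L_u(x_u) = v^{2^k} one has S(u, v) = (−1)^{m/e}·2^m·χ1(u·x_u^{2^k+1}). -/

import Mathlib

/-- The absolute trace map `Tr : F → F_2`, viewed inside `F` (its values lie in `{0,1}`),
for a field `F` with `2^n` elements. -/
def absTr (n : ℕ) {F : Type*} [Field F] (x : F) : F :=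
  ∑ i ∈ Finset.range n, x ^ (2 ^ i)

/-- The canonical additive character `χ1(x) = (−1)^{Tr(x)} ∈ ℤ`. -/
def chi (n : ℕ) {F : Type*} [Field F] [DecidableEq F] (x : F) : ℤ :=
  if absTr n x = 0 then 1 else -1

/-!
Write `Q(x) = u x^(2^k+1)`. Expanding `Q(x + c)` gives
`χ(Q(x + c)) = χ(Q x) χ(Q c) χ(ℓ_c x)` with `ℓ_c = u c^(2^k) + (u c)^(2^(n-k))`, and
`ℓ_c^(2^k) = L_u(c)`. So when `L_u` is injective, orthogonality of additive characters gives
`S(u,0)^2 = 2^n`, and the shift `x ↦ x + x_u` gives `S(u,v) = χ(Q x_u) S(u,0)`.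
`L_u` is injective since `L_u(w) = 0` with `w ≠ 0` makes `u^(2^k-1)` a `(2^k+1)`-th power, while
`2^e + 1` divides `2^k + 1` and is coprime to `2^k - 1`. Finally `S(u,0) = ±2^m`, and the sign is
read off modulo `2^e + 1`: on `F^*` the summand of `S(u,0)` is constant on the fibres of
`x ↦ x^(2^k+1)`, whose sizes are divisible by `2^e + 1`, so `S(u,0) ≡ 1 ≡ (-1)^(m/e) 2^m`.
-/

open Finset

theorem Nat.odd_div_gcd_of_even_div_gcd {k n : ℕ} (hk : 0 < k) (hn : Even (n / k.gcd n)) :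
    Odd (k / k.gcd n) := by
  have hcop := Nat.coprime_div_gcd_div_gcd (m := k) (n := n) (Nat.gcd_pos_of_pos_left n hk)
  rw [← Nat.not_even_iff_odd]
  intro hk2
  have h2 := Nat.dvd_gcd hk2.two_dvd hn.two_dvd
  rw [hcop] at h2
  omega

theorem Nat.coprime_two_pow_sub_one_two_pow_add_one {k : ℕ} (hk : k ≠ 0) :
    Nat.Coprime (2 ^ k - 1) (2 ^ k + 1) := by
  have h : 2 ^ k + 1 = 2 + (2 ^ k - 1) := by have := Nat.one_le_two_pow (n := k); omega
  rw [h, Nat.coprime_add_self_right, Nat.coprime_two_right]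
  exact Nat.Even.sub_odd Nat.one_le_two_pow (Nat.even_pow.2 ⟨even_two, hk⟩) odd_one

theorem two_pow_add_one_dvd_neg_one_pow_mul_sub_one (e j : ℕ) :
    (2 ^ e + 1 : ℤ) ∣ (-1) ^ j * 2 ^ (e * j) - 1 := by
  have h := sub_dvd_pow_sub_pow (-(2 : ℤ) ^ e) 1 j
  rwa [one_pow, neg_pow, ← pow_mul, show -(2 : ℤ) ^ e - 1 = -(2 ^ e + 1) by ring, neg_dvd] at h

theorem Int.eq_of_sq_eq_sq_of_dvd_sub_one {a b d : ℤ} (hsq : a ^ 2 = b ^ 2) (ha : d ∣ a - 1)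
    (hb : d ∣ b - 1) (hd : 2 < d) : a = b := by
  rcases sq_eq_sq_iff_eq_or_eq_neg.1 hsq with h | h
  · exact h
  · have h2 : d ∣ 2 := by simpa [h] using (dvd_add ha hb).neg_right
    have := Int.le_of_dvd two_pos h2
    omega

section Group
variable {G : Type*} [CommGroup G]

theorem exists_pow_eq_of_pow_eq_pow_of_coprime {a d : ℕ} (had : Nat.Coprime a d) {x y : G}
    (h : x ^ a = y ^ d) : ∃ z : G, z ^ d = x := by
  have hgcd : (a : ℤ) * a.gcdA d + d * a.gcdB d = 1 := by
    rw [← Nat.gcd_eq_gcd_ab, had, Nat.cast_one]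
  refine ⟨y ^ a.gcdA d * x ^ a.gcdB d, ?_⟩
  rw [← zpow_natCast, mul_zpow, ← zpow_mul, ← zpow_mul, mul_comm _ (d : ℤ), zpow_mul,
    zpow_natCast, ← h, ← zpow_natCast, ← zpow_mul, mul_comm _ (d : ℤ), ← zpow_add, hgcd, zpow_one]

theorem dvd_sum_comp_pow [IsCyclic G] [Fintype G] [DecidableEq G] {R : Type*} [CommRing R]
    {d s : ℕ} (hdG : d ∣ Nat.card G) (hds : d ∣ s) (f : G → R) :
    (d : R) ∣ ∑ g, f (g ^ s) := by
  rw [← sum_fiberwise' univ (· ^ s) f]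
  refine dvd_sum fun y _ => ?_
  rw [sum_const, nsmul_eq_mul]
  refine Dvd.dvd.mul_right (Nat.cast_dvd_cast ?_) _
  by_cases hy : y ∈ Set.range (powMonoidHom s : G →* G)
  · have hker : #{g : G | g ^ s = 1} = (Nat.card G).gcd s := by
      rw [← IsCyclic.card_powMonoidHom_ker, Nat.card_eq_fintype_card, Fintype.card_subtype]
      simp [MonoidHom.mem_ker]
    have hfib := MonoidHom.card_fiber_eq_of_mem_range (powMonoidHom s : G →* G) hy ⟨1, one_pow s⟩
    simp only [powMonoidHom_apply] at hfib
    rw [hfib, hker]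
    exact Nat.dvd_gcd hdG hds
  · rw [card_eq_zero.mpr (filter_eq_empty_iff.mpr fun g _ (hg : g ^ s = y) => hy ⟨g, hg⟩)]
    exact dvd_zero d

theorem sum_eq_add_sum_units {G₀ : Type*} [GroupWithZero G₀] [Fintype G₀] [DecidableEq G₀]
    {R : Type*} [AddCommMonoid R] (f : G₀ → R) :
    ∑ x, f x = f 0 + ∑ x : G₀ˣ, f x := by
  rw [Fintype.sum_eq_add_sum_subtype_ne _ 0]
  exact congrArg _ (Fintype.sum_equiv unitsEquivNeZero _ _ fun _ => rfl).symm

end Group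

section Trace
variable (n : ℕ) {F : Type*} [Field F]

theorem absTr_add [CharP F 2] (x y : F) : absTr n (x + y) = absTr n x + absTr n y := by
  simp only [absTr, ← sum_add_distrib, add_pow_char_pow]

theorem absTr_zero : absTr n (0 : F) = 0 :=
  sum_eq_zero fun i _ => zero_pow (pow_ne_zero i two_ne_zero)

variable [Fintype F]

theorem absTr_eq_algebraMap_trace [Algebra (ZMod 2) F] (hcard : Fintype.card F = 2 ^ n) (x : F) :
    absTr n x = algebraMap (ZMod 2) F (Algebra.trace (ZMod 2) F x) := by
  have hrank : Module.finrank (ZMod 2) F = n := by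
    have h := Module.card_eq_pow_finrank (K := ZMod 2) (V := F)
    rw [hcard, ZMod.card] at h
    exact (Nat.pow_right_injective le_rfl h).symm
  rw [FiniteField.algebraMap_trace_eq_sum_pow, hrank, Nat.card_zmod]
  rfl

theorem pow_two_pow_eq_self (hcard : Fintype.card F = 2 ^ n) (x : F) : x ^ 2 ^ n = x :=
  hcard ▸ FiniteField.pow_card x

variable [CharP F 2]

theorem absTr_eq_zero_or_one (hcard : Fintype.card F = 2 ^ n) (x : F) :
    absTr n x = 0 ∨ absTr n x = 1 := by
  let := ZMod.algebra F 2
  rw [absTr_eq_algebraMap_trace n hcard]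
  generalize Algebra.trace (ZMod 2) F x = t
  fin_cases t
  · exact .inl (map_zero _)
  · exact .inr (map_one _)

theorem exists_absTr_ne_zero (hcard : Fintype.card F = 2 ^ n) : ∃ b : F, absTr n b ≠ 0 := by
  let := ZMod.algebra F 2
  obtain ⟨b, hb⟩ := Algebra.trace_surjective (ZMod 2) F 1
  exact ⟨b, by rw [absTr_eq_algebraMap_trace n hcard, hb, map_one]; exact one_ne_zero⟩

theorem absTr_pow_two_pow (hcard : Fintype.card F = 2 ^ n) (j : ℕ) (x : F) :
    absTr n (x ^ 2 ^ j) = absTr n x := by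
  have h : absTr n (x ^ 2 ^ j) = absTr n x ^ 2 ^ j := by
    simp only [absTr, sum_pow_char_pow, ← pow_mul, mul_comm]
  rcases absTr_eq_zero_or_one n hcard x with h0 | h1
  · rw [h, h0, zero_pow (pow_ne_zero j two_ne_zero)]
  · rw [h, h1, one_pow]

end Trace

section Character
variable (n : ℕ) {F : Type*} [Field F] [DecidableEq F]

theorem chi_zero : chi n (0 : F) = 1 := if_pos (absTr_zero n)

theorem chi_mul_self (x : F) : chi n x * chi n x = 1 := by
  unfold chi; split_ifs <;> rfl

variable [Fintype F] [CharP F 2]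

theorem chi_add (hcard : Fintype.card F = 2 ^ n) (x y : F) :
    chi n (x + y) = chi n x * chi n y := by
  unfold chi
  rw [absTr_add]
  rcases absTr_eq_zero_or_one n hcard x with hx | hx <;>
    rcases absTr_eq_zero_or_one n hcard y with hy | hy <;>
    simp [hx, hy, CharTwo.add_self_eq_zero]

def chiAddChar (hcard : Fintype.card F = 2 ^ n) : AddChar F ℤ where
  toFun := chi n
  map_zero_eq_one' := chi_zero n
  map_add_eq_mul' := chi_add n hcard

theorem chiAddChar_ne_one (hcard : Fintype.card F = 2 ^ n) : chiAddChar n hcard ≠ 1 := by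
  obtain ⟨b, hb⟩ := exists_absTr_ne_zero n hcard
  exact AddChar.ne_one_iff.2 ⟨b, by simp [chiAddChar, chi, hb]⟩

theorem sum_chi_mul (hcard : Fintype.card F = 2 ^ n) (c : F) :
    ∑ x : F, chi n (c * x) = if c = 0 then 2 ^ n else 0 := by
  have h := AddChar.sum_mulShift c (AddChar.IsPrimitive.of_ne_one (chiAddChar_ne_one n hcard))
  simp only [chiAddChar, AddChar.coe_mk, hcard] at h
  push_cast at h
  simpa only [mul_comm c] using h

theorem chi_pow_two_pow (hcard : Fintype.card F = 2 ^ n) (j : ℕ) (x : F) :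
    chi n (x ^ 2 ^ j) = chi n x := by
  simp only [chi, absTr_pow_two_pow n hcard]

theorem chi_mul_pow_two_pow {k : ℕ} (hcard : Fintype.card F = 2 ^ n) (hk : k ≤ n) (a x : F) :
    chi n (a * x ^ 2 ^ k) = chi n (a ^ 2 ^ (n - k) * x) := by
  rw [← chi_pow_two_pow n hcard (n - k), mul_pow, ← pow_mul, ← pow_add, Nat.add_sub_cancel' hk,
    pow_two_pow_eq_self n hcard]

end Character

section GoldMap
variable {F : Type*} [Field F] [CharP F 2]

def goldL (k : ℕ) (u : F) : F →+ F where
  toFun x := u ^ 2 ^ k * x ^ 2 ^ (2 * k) + u * x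
  map_zero' := by simp
  map_add' x y := by simp only [add_pow_char_pow]; ring

theorem goldL_apply (k : ℕ) (u x : F) : goldL k u x = u ^ 2 ^ k * x ^ 2 ^ (2 * k) + u * x := rfl

theorem goldL_injective {k d : ℕ} (hd : d ∣ 2 ^ k + 1) (hcop : Nat.Coprime (2 ^ k - 1) d)
    {u : F} (hu : u ≠ 0) (hpow : ¬ ∃ w : F, w ≠ 0 ∧ w ^ d = u) :
    Function.Injective (goldL k u) := by
  refine (injective_iff_map_eq_zero _).2 fun w hw => ?_
  by_contra hw0
  set a := 2 ^ k - 1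
  have ha : 2 ^ k = a + 1 := (Nat.sub_add_cancel Nat.one_le_two_pow).symm
  have ha2 : 2 ^ (2 * k) = a * (a + 2) + 1 := by rw [pow_mul', ha]; ring
  let U := Units.mk0 u hu
  let W := Units.mk0 w hw0
  have hUW : U ^ (a + 1) * W ^ (a * (a + 2) + 1) = U * W := by
    ext
    simpa [U, W, goldL_apply, ha, ha2, CharTwo.add_eq_zero] using hw
  -- `u ^ (2^k - 1)` is a `(2^k + 1)`-th power, hence a `d`-th power
  have hUa : U ^ a = ((W ^ a)⁻¹ ^ ((a + 2) / d)) ^ d := by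
    rw [← pow_mul, Nat.div_mul_cancel (by rwa [show a + 2 = 2 ^ k + 1 by omega]), inv_pow,
      ← pow_mul, eq_inv_iff_mul_eq_one]
    rw [pow_succ, pow_succ, mul_mul_mul_comm] at hUW
    exact mul_right_cancel (hUW.trans (one_mul _).symm)
  obtain ⟨z, hz⟩ := exists_pow_eq_of_pow_eq_pow_of_coprime hcop hUa
  exact hpow ⟨z, z.ne_zero, by simpa [U] using congrArg Units.val hz⟩

theorem polar_pow_two_pow_eq_goldL {n k : ℕ} [Fintype F] (hcard : Fintype.card F = 2 ^ n)
    (hk : k ≤ n) (u c : F) :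
    (u * c ^ 2 ^ k + (u * c) ^ 2 ^ (n - k)) ^ 2 ^ k = goldL k u c := by
  rw [add_pow_char_pow, ← pow_mul, ← pow_add, Nat.sub_add_cancel hk, pow_two_pow_eq_self n hcard,
    mul_pow, ← pow_mul, ← pow_add, goldL_apply, two_mul]

end GoldMap

section WeilSum
variable (n k : ℕ) {F : Type*} [Field F] [Fintype F] [DecidableEq F]

def weilSum (u v : F) : ℤ := ∑ x : F, chi n (u * x ^ (2 ^ k + 1) + v * x)

theorem dvd_weilSum_zero_sub_one {d : ℕ} (hdk : d ∣ 2 ^ k + 1)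
    (hdq : d ∣ Fintype.card F - 1) (u : F) : (d : ℤ) ∣ weilSum n k u 0 - 1 := by
  simp only [weilSum, zero_mul, add_zero]
  rw [sum_eq_add_sum_units, zero_pow (Nat.succ_ne_zero _), mul_zero, chi_zero,
    add_sub_cancel_left]
  simp only [← Units.val_pow_eq_pow_val]
  exact dvd_sum_comp_pow (by rwa [Nat.card_eq_fintype_card, Fintype.card_units]) hdk
    (fun g : Fˣ => chi n (u * g))

variable [CharP F 2] {n k}

theorem chi_mul_add_pow (hcard : Fintype.card F = 2 ^ n) (hk : k ≤ n) (u x c : F) :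
    chi n (u * (x + c) ^ (2 ^ k + 1)) =
      chi n (u * x ^ (2 ^ k + 1)) * chi n (u * c ^ (2 ^ k + 1)) *
        chi n ((u * c ^ 2 ^ k + (u * c) ^ 2 ^ (n - k)) * x) := by
  have hexp : u * (x + c) ^ (2 ^ k + 1) =
      u * x ^ (2 ^ k + 1) + u * c ^ (2 ^ k + 1) + (u * c * x ^ 2 ^ k + u * c ^ 2 ^ k * x) := by
    rw [pow_succ, add_pow_char_pow]; ring
  rw [hexp, chi_add n hcard, chi_add n hcard, chi_add n hcard, chi_mul_pow_two_pow n hcard hk,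
    add_mul, chi_add n hcard]
  ring

theorem weilSum_zero_sq (hcard : Fintype.card F = 2 ^ n) (hk : k ≤ n) {u : F}
    (hL : Function.Injective (goldL k u)) : weilSum n k u 0 ^ 2 = 2 ^ n := by
  have hpolar (c : F) : u * c ^ 2 ^ k + (u * c) ^ 2 ^ (n - k) = 0 ↔ c = 0 := by
    rw [← pow_eq_zero_iff (pow_ne_zero k two_ne_zero), polar_pow_two_pow_eq_goldL hcard hk,
      map_eq_zero_iff _ hL]
  have hinner (c : F) : ∑ x, chi n (u * x ^ (2 ^ k + 1)) * chi n (u * (x + c) ^ (2 ^ k + 1)) =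
      if c = 0 then 2 ^ n else 0 := by
    simp_rw [chi_mul_add_pow hcard hk, ← mul_assoc, chi_mul_self, one_mul, ← mul_sum,
      sum_chi_mul n hcard, hpolar]
    split_ifs with hc <;> simp [hc, chi_zero]
  calc weilSum n k u 0 ^ 2
      = ∑ c, ∑ x, chi n (u * x ^ (2 ^ k + 1)) * chi n (u * (x + c) ^ (2 ^ k + 1)) := by
        simp only [weilSum, zero_mul, add_zero, sq, sum_mul_sum]
        exact (sum_congr rfl fun x _ =>
          (Fintype.sum_equiv (Equiv.addLeft x) _ _ fun _ => rfl).symm).trans sum_comm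
    _ = 2 ^ n := by simp_rw [hinner, sum_ite_eq', mem_univ, if_true]

theorem weilSum_eq_chi_mul_weilSum_zero (hcard : Fintype.card F = 2 ^ n) (hk : k ≤ n)
    {u v c : F} (hc : goldL k u c = v ^ 2 ^ k) :
    weilSum n k u v = chi n (u * c ^ (2 ^ k + 1)) * weilSum n k u 0 := by
  have hv : u * c ^ 2 ^ k + (u * c) ^ 2 ^ (n - k) = v :=
    iterateFrobenius_inj F 2 k (by simpa [iterateFrobenius_def] using
      (polar_pow_two_pow_eq_goldL hcard hk u c).trans hc)
  have hshift (x : F) : chi n (u * x ^ (2 ^ k + 1) + v * x) =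
      chi n (u * c ^ (2 ^ k + 1)) * chi n (u * (x + c) ^ (2 ^ k + 1)) := by
    rw [chi_mul_add_pow hcard hk, hv, chi_add n hcard]
    linear_combination
      -(chi n (u * x ^ (2 ^ k + 1)) * chi n (v * x)) * chi_mul_self n (u * c ^ (2 ^ k + 1))
  simp only [weilSum, hshift, ← mul_sum, zero_mul, add_zero]
  exact congrArg _ (Fintype.sum_equiv (Equiv.addRight c) _ _ fun _ => rfl)

end WeilSum

theorem weil_sum_gold_even_nonpow_general (n k e m : ℕ) (hk1 : 1 ≤ k) (hkn : k < n)
    (he : e = Nat.gcd k n) (heven : Even (n / e)) (hm : n = 2 * m) (hem : e ∣ m)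
    {F : Type*} [Field F] [Fintype F] [DecidableEq F] [CharP F 2]
    (hcard : Fintype.card F = 2 ^ n)
    (u v : F) (hu : u ≠ 0)
    (hpow : ¬ ∃ w : F, w ≠ 0 ∧ w ^ (2 ^ e + 1) = u) :
    Function.Bijective (fun x : F => u ^ (2 ^ k) * x ^ (2 ^ (2 * k)) + u * x) ∧
    ∀ xu : F, u ^ (2 ^ k) * xu ^ (2 ^ (2 * k)) + u * xu = v ^ (2 ^ k) →
      ∑ x : F, chi n (u * x ^ (2 ^ k + 1) + v * x) =
        (-1) ^ (m / e) * 2 ^ m * chi n (u * xu ^ (2 ^ k + 1)) := by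
  have hko : Odd (k / e) := he ▸ Nat.odd_div_gcd_of_even_div_gcd hk1 (he ▸ heven)
  have hek : e ∣ k := he ▸ Nat.gcd_dvd_left k n
  have hdk : 2 ^ e + 1 ∣ 2 ^ k + 1 := by
    simpa [← pow_mul, Nat.mul_div_cancel' hek] using hko.nat_add_dvd_pow_add_pow (2 ^ e) 1
  have hdq : 2 ^ e + 1 ∣ Fintype.card F - 1 := by
    have h := two_pow_add_one_dvd_neg_one_pow_mul_sub_one e (n / e)
    rw [heven.neg_one_pow, one_mul, Nat.mul_div_cancel' (he ▸ Nat.gcd_dvd_right k n)] at h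
    exact Int.natCast_dvd_natCast.1 (by push_cast [hcard, Nat.one_le_two_pow]; exact h)
  have hL : Function.Injective (goldL k u) := goldL_injective hdk
    ((Nat.coprime_two_pow_sub_one_two_pow_add_one (by omega)).coprime_dvd_right hdk) hu hpow
  refine ⟨Finite.injective_iff_bijective.1 hL, fun xu hxu => ?_⟩
  have hsq : weilSum n k u 0 ^ 2 = ((-1) ^ (m / e) * 2 ^ m) ^ 2 := by
    rw [weilSum_zero_sq hcard hkn.le hL, mul_pow, pow_right_comm, neg_one_sq, one_pow, one_mul,
      ← pow_mul, hm, mul_comm]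
  have hsign : (2 ^ e + 1 : ℤ) ∣ (-1) ^ (m / e) * 2 ^ m - 1 := by
    simpa [Nat.mul_div_cancel' hem] using two_pow_add_one_dvd_neg_one_pow_mul_sub_one e (m / e)
  have hd : (2 : ℤ) < 2 ^ e + 1 := by
    have : (2 : ℤ) ≤ 2 ^ e := le_self_pow₀ one_le_two (he ▸ Nat.gcd_pos_of_pos_left n hk1).ne'
    omega
  have hS : weilSum n k u 0 = (-1) ^ (m / e) * 2 ^ m := Int.eq_of_sq_eq_sq_of_dvd_sub_one hsq
    (by exact_mod_cast dvd_weilSum_zero_sub_one n k hdk hdq u) hsign hd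
  rw [← weilSum, weilSum_eq_chi_mul_weilSum_zero hcard hkn.le hxu, hS]
  ring

/-- If `n/e` is even (`e = gcd(k,n)`, `n = 2m`, `e ∣ m`), `u, v ≠ 0` and `u` is not a
`(2^e+1)`-th power, then `L_u(x) = u^{2^k} x^{2^{2k}} + u x` is a bijection of `F`, and
for the (unique) `x_u` with `L_u(x_u) = v^{2^k}` one has
`S(u,v) = (−1)^{m/e} 2^m χ1(u x_u^{2^k+1})`. -/
theorem weil_sum_gold_even_nonpow (n k e m : ℕ) (hk1 : 1 ≤ k) (hkn : k < n)
    (he : e = Nat.gcd k n) (heven : Even (n / e)) (hm : n = 2 * m) (hem : e ∣ m)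
    {F : Type*} [Field F] [Fintype F] [DecidableEq F] [CharP F 2]
    (hcard : Fintype.card F = 2 ^ n)
    (u v : F) (hu : u ≠ 0) (hv : v ≠ 0)
    (hpow : ¬ ∃ w : F, w ≠ 0 ∧ w ^ (2 ^ e + 1) = u) :
    Function.Bijective (fun x : F => u ^ (2 ^ k) * x ^ (2 ^ (2 * k)) + u * x) ∧
    ∀ xu : F, u ^ (2 ^ k) * xu ^ (2 ^ (2 * k)) + u * xu = v ^ (2 ^ k) →
      ∑ x : F, chi n (u * x ^ (2 ^ k + 1) + v * x) =
        (-1) ^ (m / e) * 2 ^ m * chi n (u * xu ^ (2 ^ k + 1)) :=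
  weil_sum_gold_even_nonpow_general n k e m hk1 hkn he heven hm hem hcard u v hu hpow
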